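/- Suppose t_r ∈ (0,1) satisfies lim_{k→∞} (1/k)·log I_{k,r}(t_r) = 0. Then there exist a Borel probability measure λ on Φ_∞ and constants 0 < c ≤ C < ∞ such that for every σ ∈ Φ^*: c · E_r(σ)^{t_r} ≤ λ([σ]) ≤ C · E_r(σ)^{t_r}. -/

import Mathlib

/-!
Choose `v ≥ 0` with `∑ⱼ q_j^t b_j^v = 1` (possible since `t ≤ 1` gives `∑ⱼ q_j^t ≥ 1`), and weigh
a letter `(i,j)` of `σ_L` by `(p_{ij} a_{ij}^r)^t (b_j/a_{ij})^v` and a letter `j` of `σ_R` by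
`q_j^t b_j^v`. The weight of `σ` is then `E_r(σ)^t (b_{σ_y}/a_{σ_L})^v`, and for `σ ∈ Ψ_k` the ratio
`b_{σ_y}/a_{σ_L}` lies in `[min b, 1)`, so the weight is comparable to `E_r(σ)^t`. The cylinders
`[σ]`, `σ ∈ Ψ_k`, partition `Φ_∞`, so evaluating a product of Bernoulli measures on them shows that
the weights over `Ψ_k` sum to `Z^k`, where `Z` is the total weight of a letter of `σ_L`. Hence
`Z^k ≤ I_{k,r}(t) ≤ Z^k / (min b)^v`, the growth hypothesis forces `Z = 1`, and the product of the
Bernoulli measures with these weights is the required measure, with `c = (min b)^v` and `C = 1`.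
-/

open Filter MeasureTheory
open scoped BigOperators ENNReal NNReal Topology

namespace LGQ

noncomputable section

/-- The alphabet `G = {(i,j) : 1 ≤ i ≤ n_j, 1 ≤ j ≤ m}`, encoded as a sigma type:
an element is `⟨j, i⟩` with `j : Fin m` (the `y`-coordinate) and `i : Fin (n j)`. -/
abbrev Alph (m : ℕ) (n : Fin m → ℕ) := Σ j : Fin m, Fin (n j)

/-- A pair `σ = (σ_L, σ_R)` with `σ_L ∈ G^*` and `σ_R ∈ G_y^*`. -/
abbrev Wd (m : ℕ) (n : Fin m → ℕ) := List (Alph m n) × List (Fin m)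

variable {m : ℕ} {n : Fin m → ℕ}

/-- `a_ω := ∏ a_{i_h j_h}` along a word `ω ∈ G^*`. -/
def aP (a : Alph m n → ℝ) (w : List (Alph m n)) : ℝ := (w.map a).prod

/-- `b_τ := ∏ b_{j_h}` along a word `τ ∈ G_y^*`. -/
def bP (b : Fin m → ℝ) (τ : List (Fin m)) : ℝ := (τ.map b).prod

/-- `σ_y := (σ_L)_y ∗ σ_R` : the `y`-word of a pair `σ = σ_L ∗ σ_R`. -/
def sy (σ : Wd m n) : List (Fin m) := σ.1.map Sigma.fst ++ σ.2

/-- `Ψ_l := {σ = σ_L ∗ σ_R : σ_L ∈ G^l, σ_R ∈ G_y^*, b_{(σ_y)^-} ≥ a_{σ_L} > b_{σ_y}}`. -/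
def Psi (a : Alph m n → ℝ) (b : Fin m → ℝ) (l : ℕ) : Set (Wd m n) :=
  {σ | σ.1.length = l ∧ 1 ≤ σ.2.length ∧
    aP a σ.1 ≤ bP b (sy σ).dropLast ∧ bP b (sy σ) < aP a σ.1}

/-- `Ψ^* := ⋃_{l ≥ 1} Ψ_l`. -/
def PsiStar (a : Alph m n → ℝ) (b : Fin m → ℝ) : Set (Wd m n) :=
  {σ | ∃ l, 1 ≤ l ∧ σ ∈ Psi a b l}

/-- `q_j := Σ_{i=1}^{n_j} p_{ij}`. -/
def qf (p : Alph m n → ℝ) (j : Fin m) : ℝ := ∑ i : Fin (n j), p ⟨j, i⟩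

/-- `p_{σ_L} := ∏ p_{i_h j_h}`. -/
def pP (p : Alph m n → ℝ) (w : List (Alph m n)) : ℝ := (w.map p).prod

/-- `q_{σ_R} := ∏ q_{j_h}`. -/
def qP (p : Alph m n → ℝ) (τ : List (Fin m)) : ℝ := (τ.map (qf p)).prod

/-- `E_r(σ) := p_{σ_L} q_{σ_R} a_{σ_L}^r` (note `E_r(θ) = 1`). -/
def Er (a p : Alph m n → ℝ) (r : ℝ) (σ : Wd m n) : ℝ :=
  pP p σ.1 * qP p σ.2 * aP a σ.1 ^ r

/-- `a̲ := min a_{ij}`. -/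
def aLo (a : Alph m n → ℝ) : ℝ := ⨅ g, a g

/-- `ā := max a_{ij}`. -/
def aHi (a : Alph m n → ℝ) : ℝ := ⨆ g, a g

/-- `b̲ := min b_j`. -/
def bLo (b : Fin m → ℝ) : ℝ := ⨅ j, b j

/-- `b̄ := max b_j`. -/
def bHi (b : Fin m → ℝ) : ℝ := ⨆ j, b j

/-- `p̲ := min p_{ij}`. -/
def pLo (p : Alph m n → ℝ) : ℝ := ⨅ g, p g

/-- `q̲ := min q_j`. -/
def qLo (p : Alph m n → ℝ) : ℝ := ⨅ j, qf p j

/-- `A_1 := ⌊log a̲ / log b̄⌋ + 1`. -/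
def A1 (a : Alph m n → ℝ) (b : Fin m → ℝ) : ℤ :=
  ⌊Real.log (aLo a) / Real.log (bHi b)⌋ + 1

/-- `A_2 := ⌊log b̲ / log ā⌋ + 1`. -/
def A2 (a : Alph m n → ℝ) (b : Fin m → ℝ) : ℤ :=
  ⌊Real.log (bLo b) / Real.log (aHi a)⌋ + 1

/-- `A_3 := max_{(i,j)∈G} a_{ij}/b_j`. -/
def A3 (a : Alph m n → ℝ) (b : Fin m → ℝ) : ℝ := ⨆ g : Alph m n, a g / b g.1

/-- `A_4 := log A_3 / log b̲`. -/
def A4 (a : Alph m n → ℝ) (b : Fin m → ℝ) : ℝ := Real.log (A3 a b) / Real.log (bLo b)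

/-- `A_6 := ⌊1/A_4⌋`. -/
def A6 (a : Alph m n → ℝ) (b : Fin m → ℝ) : ℤ := ⌊1 / A4 a b⌋

/-- `η̲_r := p̲ q̲^{A_1} a̲^r`. -/
def etaLo (a : Alph m n → ℝ) (b : Fin m → ℝ) (p : Alph m n → ℝ) (r : ℝ) : ℝ :=
  pLo p * qLo p ^ A1 a b * aLo a ^ r

/-- `A_{5,r} := ⌊log(q̲² η̲_r)/(r·log ā)⌋`. -/
def A5 (a : Alph m n → ℝ) (b : Fin m → ℝ) (p : Alph m n → ℝ) (r : ℝ) : ℤ :=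
  ⌊Real.log (qLo p ^ 2 * etaLo a b p r) / (r * Real.log (aHi a))⌋

/-- `T_{1,r} := ⌊(A_1 + A_{5,r} + 3)/A_4⌋`. -/
def T1 (a : Alph m n → ℝ) (b : Fin m → ℝ) (p : Alph m n → ℝ) (r : ℝ) : ℤ :=
  ⌊((A1 a b + A5 a b p r + 3 : ℤ) : ℝ) / A4 a b⌋

/-- `ρ = σ^♭`:  for `σ ∈ Ψ_1`, `σ^♭ = θ`; for `σ ∈ Ψ_l` with `l ≥ 2`, `σ^♭` is the unique
`ρ ∈ Ψ_{l-1}` with `ρ_L = (σ_L)^-` and `ρ_y` an initial segment of `σ_y`. -/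
def IsFlat (a : Alph m n → ℝ) (b : Fin m → ℝ) (σ ρ : Wd m n) : Prop :=
  (σ.1.length = 1 ∧ ρ = (([], []) : Wd m n)) ∨
  (2 ≤ σ.1.length ∧ ρ ∈ Psi a b (σ.1.length - 1) ∧ ρ.1 = σ.1.dropLast ∧ sy ρ <+: sy σ)

/-- `Λ_{n,r} := {σ ∈ Ψ^* : E_r(σ^♭) ≥ η̲_r^n > E_r(σ)}`. -/
def Lam (a : Alph m n → ℝ) (b : Fin m → ℝ) (p : Alph m n → ℝ) (r : ℝ) (N : ℕ) :
    Set (Wd m n) :=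
  {σ | σ ∈ PsiStar a b ∧ ∃ ρ : Wd m n, IsFlat a b σ ρ ∧
    etaLo a b p r ^ N ≤ Er a p r ρ ∧ Er a p r σ < etaLo a b p r ^ N}

/-- `S_{n,r} := {σ ∈ Ψ^* : η̲_r^{n+1} ≤ E_r(σ) < η̲_r^n}`. -/
def Snr (a : Alph m n → ℝ) (b : Fin m → ℝ) (p : Alph m n → ℝ) (r : ℝ) (N : ℕ) :
    Set (Wd m n) :=
  {σ | σ ∈ PsiStar a b ∧ etaLo a b p r ^ (N + 1) ≤ Er a p r σ ∧
    Er a p r σ < etaLo a b p r ^ N}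

/-- `G_1(σ) := {ω ∈ S_{n,r} : σ_L ⪯ ω_L and σ_y ⪯ ω_y}`. -/
def G1 (a : Alph m n → ℝ) (b : Fin m → ℝ) (p : Alph m n → ℝ) (r : ℝ) (N : ℕ)
    (σ : Wd m n) : Set (Wd m n) :=
  {ω | ω ∈ Snr a b p r N ∧ σ.1 <+: ω.1 ∧ sy σ <+: sy ω}

/-- `Λ_h(σ) := {ρ ∈ Φ_{l+h} : σ ⪯ ρ}` (componentwise order on pairs). -/
def LamH (a : Alph m n → ℝ) (b : Fin m → ℝ) (σ : Wd m n) (h : ℕ) : Set (Wd m n) :=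
  {ρ | ρ ∈ Psi a b (σ.1.length + h) ∧ σ.1 <+: ρ.1 ∧ σ.2 <+: ρ.2}

/-- `I_{k,r}(t) := Σ_{ω∈Φ_k} E_r(ω)^t`. -/
def Ih (a : Alph m n → ℝ) (b : Fin m → ℝ) (p : Alph m n → ℝ) (r : ℝ) (k : ℕ) (t : ℝ) : ℝ :=
  ∑' ω : Psi a b k, Er a p r ω.1 ^ t

/-- `Υ_n(t,s) := Σ_{σ∈Ψ_n} (p_{σ_L} q_{σ_R})^t a_{σ_L}^s`. -/
def Ups (a : Alph m n → ℝ) (b : Fin m → ℝ) (p : Alph m n → ℝ) (N : ℕ) (t s : ℝ) : ℝ :=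
  ∑' σ : Psi a b N, (pP p σ.1.1 * qP p σ.1.2) ^ t * aP a σ.1.1 ^ s

/-- `τ_0 := ((1,j_0),(n_{j_0},j_0))`. -/
def tau0 (j0 : Fin m) (h : 2 ≤ n j0) : List (Alph m n) :=
  [⟨j0, ⟨0, by omega⟩⟩, ⟨j0, ⟨n j0 - 1, by omega⟩⟩]

/-- `σ̄` is a bar-extension of `σ ∈ Ψ_l`: `σ̄ ∈ Ψ_{l+2}`, `σ̄_L = σ_L ∗ τ_0`, `σ_R ⪯ σ̄_R`. -/
def BarExt (a : Alph m n → ℝ) (b : Fin m → ℝ) (j0 : Fin m) (h : 2 ≤ n j0)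
    (σ σb : Wd m n) : Prop :=
  σb ∈ Psi a b (σ.1.length + 2) ∧ σb.1 = σ.1 ++ tau0 j0 h ∧ σ.2 <+: σb.2

/-- cylinder set `[σ] ⊆ Φ_∞ = G^ℕ × G_y^ℕ`. -/
def Cyl (σ : Wd m n) : Set ((ℕ → Alph m n) × (ℕ → Fin m)) :=
  {x | (∀ i : ℕ, ∀ hi : i < σ.1.length, x.1 i = σ.1.get ⟨i, hi⟩) ∧
       (∀ i : ℕ, ∀ hi : i < σ.2.length, x.2 i = σ.2.get ⟨i, hi⟩)}

/-- the affine map `f_{ij}(x,y) = (a_{ij} x + c_{ij}, b_j y + d_j)`. -/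
def fmap (a : Alph m n → ℝ) (b : Fin m → ℝ) (c : Alph m n → ℝ) (d : Fin m → ℝ)
    (g : Alph m n) : ℝ × ℝ → ℝ × ℝ :=
  fun x => (a g * x.1 + c g, b g.1 * x.2 + d g.1)

/-- `A_{L,σ} = c_{i_1j_1} + Σ_{p≥2} (∏_{h<p} a_{i_hj_h}) c_{i_pj_p}`. -/
def xL (a c : Alph m n → ℝ) : List (Alph m n) → ℝ
  | [] => 0
  | g :: w => c g + a g * xL a c w

/-- `B_{L,σ} = d_{j_1} + Σ_{p≥2} (∏_{h<p} b_{j_h}) d_{j_p}`. -/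
def yL (b d : Fin m → ℝ) : List (Fin m) → ℝ
  | [] => 0
  | j :: τ => d j + b j * yL b d τ

/-- the approximate square `F_σ = [A_{L,σ}, A_{L,σ}+a_{σ_L}] × [B_{L,σ}, B_{L,σ}+b_{σ_y}]`. -/
def Fsq (a c : Alph m n → ℝ) (b d : Fin m → ℝ) (σ : Wd m n) : Set (ℝ × ℝ) :=
  Set.Icc (xL a c σ.1) (xL a c σ.1 + aP a σ.1) ×ˢ
    Set.Icc (yL b d (sy σ)) (yL b d (sy σ) + bP b (sy σ))

/-- the Euclidean distance on `ℝ²`. -/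
def eudist (x y : ℝ × ℝ) : ℝ := Real.sqrt ((x.1 - y.1) ^ 2 + (x.2 - y.2) ^ 2)

/-- the horizontal distance `d_h(S,T) = inf{|x-x'| : (x,y)∈S, (x',y')∈T}`. -/
def dH (S T : Set (ℝ × ℝ)) : ℝ := sInf {e | ∃ x ∈ S, ∃ y ∈ T, e = |x.1 - y.1|}

/-- the (Euclidean) diameter of a subset of `ℝ²`. -/
def euDiam (S : Set (ℝ × ℝ)) : ℝ := sSup {e | ∃ x ∈ S, ∃ y ∈ S, e = eudist x y}

/-- the `N`-th quantization error of order `r`. -/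
def qerr (μ : Measure (ℝ × ℝ)) (r : ℝ) (N : ℕ) : ℝ :=
  sInf {e : ℝ | ∃ α : Finset (ℝ × ℝ), ∃ hα : α.Nonempty, α.card ≤ N ∧
    e = (∫ x, α.inf' hα (fun y => eudist x y ^ r) ∂μ) ^ (1 / r)}

/-- the topological support of a measure on `ℝ²`. -/
def suppSet (μ : Measure (ℝ × ℝ)) : Set (ℝ × ℝ) :=
  {x | ∀ U : Set (ℝ × ℝ), IsOpen U → x ∈ U → μ U ≠ 0}

/-- the dyadic square `[k 2^{-N}, (k+1) 2^{-N}) × [k' 2^{-N}, (k'+1) 2^{-N})`. -/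
def Dy (N : ℕ) (k : ℤ × ℤ) : Set (ℝ × ℝ) :=
  Set.Ico ((k.1 : ℝ) * (2 : ℝ) ^ (-(N : ℤ))) (((k.1 : ℝ) + 1) * (2 : ℝ) ^ (-(N : ℤ))) ×ˢ
    Set.Ico ((k.2 : ℝ) * (2 : ℝ) ^ (-(N : ℤ))) (((k.2 : ℝ) + 1) * (2 : ℝ) ^ (-(N : ℤ)))


instance {ι : Type*} {β : ι → Type*} [∀ i, MeasurableSpace (β i)]
    [∀ i, DiscreteMeasurableSpace (β i)] : DiscreteMeasurableSpace (Sigma β) :=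
  ⟨fun _ => MeasurableSpace.measurableSet_iInf.2 fun i =>
    @MeasurableSet.of_discrete (β i) _ _ _⟩

lemma _root_.List.prod_map_nonneg {ι : Type*} {f : ι → ℝ} (hf : ∀ i, 0 ≤ f i)
    (l : List ι) : 0 ≤ (l.map f).prod :=
  List.prod_nonneg fun _ hx => by
    obtain ⟨i, -, rfl⟩ := List.mem_map.1 hx
    exact hf i

lemma _root_.List.prod_map_pos {ι : Type*} {f : ι → ℝ} (hf : ∀ i, 0 < f i)
    (l : List ι) : 0 < (l.map f).prod :=
  List.prod_pos fun _ hx => by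
    obtain ⟨i, -, rfl⟩ := List.mem_map.1 hx
    exact hf i

lemma _root_.List.prod_map_div {ι : Type*} (l : List ι) (f g : ι → ℝ) :
    (l.map fun i => f i / g i).prod = (l.map f).prod / (l.map g).prod := by
  simpa using Multiset.prod_map_div (m := (l : Multiset ι)) (f := f) (g := g)

lemma _root_.List.prod_map_div_const {ι : Type*} (l : List ι) (f : ι → ℝ) (c : ℝ) :
    (l.map fun i => f i / c).prod = (l.map f).prod / c ^ l.length := by
  simp [div_eq_mul_inv, List.prod_map_mul]

lemma _root_.Antitone.existsUnique_crossing {α : Type*} [LinearOrder α] {f : ℕ → α}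
    (hf : Antitone f) {c : α} (h0 : c ≤ f 0) (hlt : ∃ n, f n < c) :
    ∃! n, c ≤ f n ∧ f (n + 1) < c := by
  classical
  refine existsUnique_of_exists_of_unique ?_ fun i j hi hj => ?_
  · obtain ⟨n, hn⟩ : ∃ n, Nat.find hlt = n + 1 :=
      Nat.exists_eq_add_one.2 <|
        Nat.pos_of_ne_zero fun h => (Nat.find_spec hlt).not_ge (h ▸ h0)
    exact ⟨n, not_lt.1 (Nat.find_min hlt (by omega)), hn ▸ Nat.find_spec hlt⟩
  · by_contra hne
    rcases lt_or_gt_of_ne hne with h | h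
    · exact (hj.1.trans (hf h)).not_gt hi.2
    · exact (hi.1.trans (hf h)).not_gt hj.2

lemma hasSum_measureReal_of_existsUnique {α ι : Type*} [MeasurableSpace α] [Countable ι]
    (μ : Measure α) [IsProbabilityMeasure μ] {s : ι → Set α} (hs : ∀ i, MeasurableSet (s i))
    (h : ∀ x, ∃! i, x ∈ s i) : HasSum (fun i => μ.real (s i)) 1 := by
  have hdisj : Pairwise (Function.onFun Disjoint s) := fun i j hij =>
    Set.disjoint_left.2 fun x hi hj => hij ((h x).unique hi hj)
  have hunion : ⋃ i, s i = Set.univ :=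
    Set.eq_univ_of_forall fun x => Set.mem_iUnion.2 (h x).exists
  have hsum : ∑' i, μ (s i) = 1 := by rw [← measure_iUnion hdisj hs, hunion, measure_univ]
  have := ENNReal.hasSum_toReal (hsum ▸ ENNReal.one_ne_top)
  rwa [← ENNReal.tsum_toReal_eq fun i => measure_ne_top μ _, hsum, ENNReal.toReal_one] at this

lemma exists_nonneg_sum_mul_rpow_eq_one {ι : Type*} [Fintype ι] {c b : ι → ℝ}
    (hb0 : ∀ i, 0 < b i) (hb1 : ∀ i, b i < 1) (hc : 1 ≤ ∑ i, c i) :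
    ∃ v : ℝ, 0 ≤ v ∧ ∑ i, c i * b i ^ v = 1 := by
  set f : ℝ → ℝ := fun v => ∑ i, c i * b i ^ v
  have hf : Continuous f := continuous_finsetSum _ fun i _ =>
    continuous_const.mul (Real.continuous_const_rpow (hb0 i).ne')
  have hlim : Tendsto f atTop (𝓝 0) := by
    simpa using tendsto_finsetSum Finset.univ fun i _ =>
      (tendsto_rpow_atTop_of_base_lt_one _ (by linarith [hb0 i]) (hb1 i)).const_mul (c i)
  obtain ⟨V, hV1, hV0⟩ :=
    ((hlim.eventually (gt_mem_nhds one_pos)).and (eventually_ge_atTop 0)).exists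
  obtain ⟨v, hv, hfv⟩ :=
    intermediate_value_Icc' hV0 hf.continuousOn ⟨hV1.le, by simpa [f] using hc⟩
  exact ⟨v, hv.1, hfv⟩

lemma le_tsum_and_tsum_le_div {ι : Type*} {w E : ι → ℝ} {S β : ℝ} (hw : HasSum w S)
    (hβ : 0 < β) (hE : ∀ i, 0 ≤ E i) (hlo : ∀ i, β * E i ≤ w i) (hhi : ∀ i, w i ≤ E i) :
    S ≤ ∑' i, E i ∧ ∑' i, E i ≤ S / β := by
  have hEw (i : ι) : E i ≤ w i / β := (le_div_iff₀' hβ).2 (hlo i)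
  have hsum : Summable E := (hw.summable.div_const β).of_nonneg_of_le hE hEw
  exact ⟨hw.tsum_eq ▸ hw.summable.tsum_le_tsum hhi hsum,
    (hsum.tsum_le_tsum hEw (hw.summable.div_const β)).trans_eq
      (hw.tsum_eq ▸ tsum_div_const)⟩

lemma eq_one_of_tendsto_log_div {I : ℕ → ℝ} {Z β : ℝ} (hZ : 0 < Z) (hβ : 0 < β)
    (hlo : ∀ k, Z ^ k ≤ I k) (hhi : ∀ k, I k ≤ Z ^ k / β)
    (hlim : Tendsto (fun k : ℕ => Real.log (I k) / k) atTop (𝓝 0)) : Z = 1 := by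
  have hupper :
      Tendsto (fun k : ℕ => Real.log Z - Real.log β / k) atTop (𝓝 (Real.log Z)) := by
    simpa using tendsto_const_nhds.sub
      (tendsto_const_nhds.div_atTop tendsto_natCast_atTop_atTop (a := Real.log β))
  have hlog : Tendsto (fun k : ℕ => Real.log (I k) / k) atTop (𝓝 (Real.log Z)) := by
    refine tendsto_of_tendsto_of_tendsto_of_le_of_le' tendsto_const_nhds hupper ?_ ?_ <;>
      filter_upwards [eventually_gt_atTop 0] with k hk <;>
      have hk' : (0 : ℝ) < k := Nat.cast_pos.2 hk
    · rw [le_div_iff₀ hk', mul_comm, ← Real.log_pow]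
      exact Real.log_le_log (pow_pos hZ k) (hlo k)
    · rw [div_le_iff₀ hk', sub_mul, div_mul_cancel₀ _ hk'.ne', mul_comm, ← Real.log_pow,
        ← Real.log_div (pow_pos hZ k).ne' hβ.ne']
      exact Real.log_le_log ((pow_pos hZ k).trans_le (hlo k)) (hhi k)
  exact Real.eq_one_of_pos_of_log_eq_zero hZ (tendsto_nhds_unique hlog hlim)

section Cylinder

variable {γ : Type*}

def pre (s : ℕ → γ) (k : ℕ) : List γ := List.ofFn fun i : Fin k => s i

@[simp] lemma length_pre (s : ℕ → γ) (k : ℕ) : (pre s k).length = k := List.length_ofFn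

lemma pre_succ (s : ℕ → γ) (k : ℕ) : pre s (k + 1) = pre s k ++ [s k] := by
  rw [pre, pre, List.ofFn_succ_last]
  rfl

def cylSet (l : List γ) : Set (ℕ → γ) :=
  (Finset.range l.length : Set ℕ).pi fun i => {y | l[i]? = some y}

lemma mem_cylSet_iff {l : List γ} {s : ℕ → γ} : s ∈ cylSet l ↔ pre s l.length = l := by
  simp only [cylSet, Set.mem_pi, Finset.coe_range, Set.mem_Iio, Set.mem_ofPred_eq, pre,
    List.ext_get_iff, List.length_ofFn, List.get_ofFn, true_and]
  exact ⟨fun h i hi _ => by simpa [List.getElem?_eq_getElem hi] using (h i hi).symm,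
    fun h i hi => by simpa [List.getElem?_eq_getElem hi] using (h i hi hi).symm⟩

variable [MeasurableSpace γ] [DiscreteMeasurableSpace γ]

lemma measurableSet_cylSet (l : List γ) : MeasurableSet (cylSet l) :=
  .pi (Finset.countable_toSet _) fun _ _ => .of_discrete

lemma infinitePi_cylSet (P : PMF γ) (l : List γ) :
    Measure.infinitePi (fun _ : ℕ => P.toMeasure) (cylSet l) = (l.map P).prod := by
  rw [cylSet, Measure.infinitePi_pi _ fun _ _ => .of_discrete, Finset.prod_range,
    ← Fin.prod_univ_fun_getElem]
  refine Finset.prod_congr rfl fun i _ => ?_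
  simp [PMF.toMeasure_apply_singleton _ _ .of_discrete]

lemma exists_bernoulli_measure [Fintype γ] {u : γ → ℝ} (hu : ∀ g, 0 ≤ u g)
    (hu1 : ∑ g, u g = 1) :
    ∃ μ : Measure (ℕ → γ), IsProbabilityMeasure μ ∧
      ∀ l, μ (cylSet l) = ENNReal.ofReal (l.map u).prod := by
  let P := PMF.ofFintype (fun g => ENNReal.ofReal (u g))
    (by rw [← ENNReal.ofReal_sum_of_nonneg fun g _ => hu g, hu1, ENNReal.ofReal_one])
  refine ⟨Measure.infinitePi fun _ => P.toMeasure, inferInstance, fun l => ?_⟩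
  rw [infinitePi_cylSet]
  induction l with
  | nil => simp
  | cons g l ih => simp [ih, ENNReal.ofReal_mul (hu g), P]

end Cylinder

lemma Cyl_eq_prod (σ : Wd m n) : Cyl σ = cylSet σ.1 ×ˢ cylSet σ.2 := by
  ext x
  simp only [Cyl, Set.mem_prod, mem_cylSet_iff, pre, List.ext_get_iff, List.length_ofFn,
    List.get_ofFn, true_and, Set.mem_ofPred_eq]
  exact ⟨fun h => ⟨fun i hi _ => h.1 i hi, fun i hi _ => h.2 i hi⟩,
    fun h => ⟨fun i hi => h.1 i hi hi, fun i hi => h.2 i hi hi⟩⟩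

lemma mem_Cyl_iff {σ : Wd m n} {x : (ℕ → Alph m n) × (ℕ → Fin m)} :
    x ∈ Cyl σ ↔ pre x.1 σ.1.length = σ.1 ∧ pre x.2 σ.2.length = σ.2 := by
  rw [Cyl_eq_prod, Set.mem_prod, mem_cylSet_iff, mem_cylSet_iff]

lemma measurableSet_Cyl (σ : Wd m n) : MeasurableSet (Cyl σ) :=
  Cyl_eq_prod σ ▸ (measurableSet_cylSet _).prod (measurableSet_cylSet _)

section Partition

variable {a : Alph m n → ℝ} {b : Fin m → ℝ}

lemma bP_append (τ τ' : List (Fin m)) : bP b (τ ++ τ') = bP b τ * bP b τ' := by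
  simp [bP]

lemma bP_nonneg (hb0 : ∀ j, 0 ≤ b j) (τ : List (Fin m)) : 0 ≤ bP b τ :=
  List.prod_map_nonneg hb0 τ

lemma bP_le_pow (hb0 : ∀ j, 0 ≤ b j) {B : ℝ} (hB : ∀ j, b j ≤ B) (τ : List (Fin m)) :
    bP b τ ≤ B ^ τ.length := by
  simpa [bP] using
    List.prod_map_le_prod_map₀ b (fun _ => B) (fun j _ => hb0 j) fun j _ => hB j

lemma mem_Psi_pre_iff {k : ℕ} (L : List (Alph m n)) (τ : ℕ → Fin m) (j : ℕ) :
    (L, pre τ (j + 1)) ∈ Psi a b k ↔ L.length = k ∧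
      aP a L ≤ bP b (L.map Sigma.fst ++ pre τ j) ∧
        bP b (L.map Sigma.fst ++ pre τ (j + 1)) < aP a L := by
  simp [Psi, sy, pre_succ, ← List.append_assoc]

/-- The length of `σ_R` is the first time the `y`-product along `x` drops below `a_{σ_L}`. -/
lemma existsUnique_mem_Cyl (ha : ∀ g, 0 < a g) (hab : ∀ g, a g ≤ b g.1)
    (hb0 : ∀ j, 0 ≤ b j) (hb1 : ∀ j, b j < 1) (k : ℕ) (x : (ℕ → Alph m n) × (ℕ → Fin m)) :
    ∃! σ : Psi a b k, x ∈ Cyl σ.1 := by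
  set L := pre x.1 k
  set f : ℕ → ℝ := fun j => bP b (L.map Sigma.fst ++ pre x.2 j)
  have hanti : Antitone f := antitone_nat_of_succ_le fun j => by
    show bP b (_ ++ pre x.2 (j + 1)) ≤ bP b (_ ++ pre x.2 j)
    rw [pre_succ, ← List.append_assoc, bP_append _ [x.2 j]]
    exact mul_le_of_le_one_right (bP_nonneg hb0 _) (by simpa [bP] using (hb1 (x.2 j)).le)
  have h0 : aP a L ≤ f 0 := by
    simpa [f, pre, aP, bP, Function.comp_def] using
      List.prod_map_le_prod_map₀ a (fun g => b g.1) (fun g _ => (ha g).le) fun g _ => hab g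
  have hlt : ∃ j, f j < aP a L := by
    have : Nonempty (Fin m) := ⟨x.2 0⟩
    obtain ⟨jmax, hjmax⟩ := Finite.exists_max b
    obtain ⟨j, hj⟩ := exists_pow_lt_of_lt_one (List.prod_map_pos ha L) (hb1 jmax)
    refine ⟨j, lt_of_le_of_lt ?_ hj⟩
    calc f j = bP b (L.map Sigma.fst) * bP b (pre x.2 j) := bP_append _ _
      _ ≤ 1 * b jmax ^ j := by
        gcongr
        · exact bP_nonneg hb0 _
        · exact (bP_le_pow hb0 hjmax _).trans (pow_le_one₀ (hb0 jmax) (hb1 jmax).le)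
        · simpa using bP_le_pow hb0 hjmax (pre x.2 j)
      _ = b jmax ^ j := one_mul _
  obtain ⟨j, hj, huniq⟩ := hanti.existsUnique_crossing h0 hlt
  refine ⟨⟨(L, pre x.2 (j + 1)), (mem_Psi_pre_iff _ _ _).2 ⟨length_pre _ _, hj⟩⟩,
    mem_Cyl_iff.2 ⟨by simp [L], by simp⟩, ?_⟩
  rintro ⟨⟨σL, σR⟩, hσ⟩ hx
  obtain ⟨hL, hR⟩ := mem_Cyl_iff.1 hx
  obtain ⟨i, hi⟩ := Nat.exists_eq_add_one.2 hσ.2.1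
  simp only [hσ.1, hi] at hL hR
  subst hL hR
  obtain rfl := huniq i ((mem_Psi_pre_iff _ _ _).1 hσ).2
  rfl

end Partition

def pairWeight (μ : Alph m n → ℝ) (ν : Fin m → ℝ) (σ : Wd m n) : ℝ :=
  (σ.1.map μ).prod * (σ.2.map ν).prod

lemma pairWeight_nonneg {μ : Alph m n → ℝ} {ν : Fin m → ℝ} (hμ : ∀ g, 0 ≤ μ g)
    (hν : ∀ j, 0 ≤ ν j) (σ : Wd m n) : 0 ≤ pairWeight μ ν σ :=
  mul_nonneg (List.prod_map_nonneg hμ _) (List.prod_map_nonneg hν _)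

lemma exists_isProbabilityMeasure_Cyl_eq {μ : Alph m n → ℝ} {ν : Fin m → ℝ}
    (hμ : ∀ g, 0 ≤ μ g) (hμ1 : ∑ g, μ g = 1) (hν : ∀ j, 0 ≤ ν j) (hν1 : ∑ j, ν j = 1) :
    ∃ lam : Measure ((ℕ → Alph m n) × (ℕ → Fin m)), IsProbabilityMeasure lam ∧
      ∀ σ, lam (Cyl σ) = ENNReal.ofReal (pairWeight μ ν σ) := by
  obtain ⟨μX, _, hX⟩ := exists_bernoulli_measure hμ hμ1
  obtain ⟨μY, _, hY⟩ := exists_bernoulli_measure hν hν1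
  refine ⟨μX.prod μY, inferInstance, fun σ => ?_⟩
  rw [Cyl_eq_prod, Measure.prod_prod, hX, hY, pairWeight,
    ENNReal.ofReal_mul (List.prod_map_nonneg hμ _)]

/-- Evaluate the product measure of the normalised weights `μ / ∑ μ` and `ν` on the partition of
`Φ_∞` into the cylinders of `Ψ_k`. -/
lemma hasSum_pairWeight_Psi {a : Alph m n → ℝ} {b : Fin m → ℝ} (ha : ∀ g, 0 < a g)
    (hab : ∀ g, a g ≤ b g.1) (hb0 : ∀ j, 0 ≤ b j) (hb1 : ∀ j, b j < 1) {μ : Alph m n → ℝ}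
    {ν : Fin m → ℝ} (hμ : ∀ g, 0 ≤ μ g) (hμ0 : 0 < ∑ g, μ g) (hν : ∀ j, 0 ≤ ν j)
    (hν1 : ∑ j, ν j = 1) (k : ℕ) :
    HasSum (fun σ : Psi a b k => pairWeight μ ν σ) ((∑ g, μ g) ^ k) := by
  set Z := ∑ g, μ g
  have hμZ (g : Alph m n) : 0 ≤ μ g / Z := div_nonneg (hμ g) hμ0.le
  obtain ⟨lam, _, hlam⟩ := exists_isProbabilityMeasure_Cyl_eq hμZ
    (by rw [← Finset.sum_div, div_self hμ0.ne']) hν hν1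
  have hcyl (σ : Psi a b k) : lam.real (Cyl σ.1) = pairWeight μ ν σ / Z ^ k := by
    rw [measureReal_def, hlam, ENNReal.toReal_ofReal (pairWeight_nonneg hμZ hν _),
      pairWeight, pairWeight, List.prod_map_div_const, σ.2.1, div_mul_eq_mul_div]
  have := (hasSum_measureReal_of_existsUnique lam (fun σ => measurableSet_Cyl _)
    (existsUnique_mem_Cyl ha hab hb0 hb1 k)).mul_left (Z ^ k)
  simpa only [hcyl, mul_one, mul_div_cancel₀ _ (pow_pos hμ0 k).ne'] using this

lemma sum_qf (p : Alph m n → ℝ) : ∑ j, qf p j = ∑ g, p g := by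
  rw [← Finset.univ_sigma_univ, Finset.sum_sigma]
  rfl

lemma qf_nonneg {p : Alph m n → ℝ} (hp : ∀ g, 0 < p g) (j : Fin m) : 0 ≤ qf p j :=
  Finset.sum_nonneg fun _ _ => (hp _).le

lemma one_le_sum_qf_rpow {p : Alph m n → ℝ} (hp : ∀ g, 0 < p g) (hp1 : ∑ g, p g = 1)
    (hn : ∀ j, 1 ≤ n j) {t : ℝ} (ht : t ≤ 1) : 1 ≤ ∑ j, qf p j ^ t := by
  have hq (j : Fin m) : 0 < qf p j :=
    Finset.sum_pos (fun _ _ => hp _) ⟨⟨0, hn j⟩, Finset.mem_univ _⟩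
  calc (1 : ℝ) = ∑ j, qf p j := by rw [sum_qf, hp1]
    _ ≤ ∑ j, qf p j ^ t := Finset.sum_le_sum fun j _ => by
      have hq1 : qf p j ≤ 1 := by
        rw [← hp1, ← sum_qf]
        exact Finset.single_le_sum (fun i _ => (hq i).le) (Finset.mem_univ j)
      simpa using Real.rpow_le_rpow_of_exponent_ge (hq j) hq1 ht

section Weights

variable (a p : Alph m n → ℝ) (b : Fin m → ℝ) (r t v : ℝ)

def weightL (g : Alph m n) : ℝ := (p g * a g ^ r) ^ t * (b g.1 / a g) ^ v

def weightR (j : Fin m) : ℝ := qf p j ^ t * b j ^ v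

variable {a p b r t v} (ha : ∀ g, 0 < a g) (hb : ∀ j, 0 < b j) (hp : ∀ g, 0 < p g)
include ha hb hp

lemma weightL_pos (g : Alph m n) : 0 < weightL a p b r t v g := by
  unfold weightL
  have := ha g; have := hb g.1; have := hp g
  positivity

omit ha in
lemma weightR_nonneg (j : Fin m) : 0 ≤ weightR p b t v j :=
  mul_nonneg (Real.rpow_nonneg (qf_nonneg hp j) t) (Real.rpow_nonneg (hb j).le v)

lemma prod_map_weightL (L : List (Alph m n)) :
    (L.map (weightL a p b r t v)).prod =
      (pP p L * aP a L ^ r) ^ t * (bP b (L.map Sigma.fst) / aP a L) ^ v := by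
  have hpa (g : Alph m n) : 0 ≤ p g * a g ^ r :=
    (mul_pos (hp g) (Real.rpow_pos_of_pos (ha g) r)).le
  have hba (g : Alph m n) : 0 ≤ b g.1 / a g := (div_pos (hb g.1) (ha g)).le
  unfold weightL
  rw [List.prod_map_mul, Real.list_prod_map_rpow' _ _ (fun g _ => hpa g),
    Real.list_prod_map_rpow' _ _ (fun g _ => hba g), List.prod_map_mul,
    Real.list_prod_map_rpow' _ _ (fun g _ => (ha g).le), List.prod_map_div]
  simp [pP, aP, bP, Function.comp_def]

omit ha in
lemma prod_map_weightR (τ : List (Fin m)) :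
    (τ.map (weightR p b t v)).prod = qP p τ ^ t * bP b τ ^ v := by
  unfold weightR
  rw [List.prod_map_mul, Real.list_prod_map_rpow' _ _ (fun j _ => qf_nonneg hp j),
    Real.list_prod_map_rpow' _ _ (fun j _ => (hb j).le), qP, bP]

omit hb in
lemma Er_nonneg (σ : Wd m n) : 0 ≤ Er a p r σ :=
  mul_nonneg (mul_nonneg (List.prod_map_nonneg (fun g => (hp g).le) _)
    (List.prod_map_nonneg (qf_nonneg hp) _))
    (Real.rpow_nonneg (List.prod_map_nonneg (fun g => (ha g).le) _) r)

lemma pairWeight_weightL_weightR (σ : Wd m n) :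
    pairWeight (weightL a p b r t v) (weightR p b t v) σ =
      Er a p r σ ^ t * (bP b (sy σ) / aP a σ.1) ^ v := by
  have hpP : 0 ≤ pP p σ.1 := List.prod_map_nonneg (fun g => (hp g).le) σ.1
  have haP : 0 < aP a σ.1 := List.prod_map_pos ha σ.1
  have haPr : 0 ≤ aP a σ.1 ^ r := Real.rpow_nonneg haP.le r
  have hqP : 0 ≤ qP p σ.2 := List.prod_map_nonneg (qf_nonneg hp) σ.2
  have hbL : 0 ≤ bP b (σ.1.map Sigma.fst) := List.prod_map_nonneg (fun j => (hb j).le) _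
  have hbR : 0 ≤ bP b σ.2 := List.prod_map_nonneg (fun j => (hb j).le) σ.2
  rw [pairWeight, prod_map_weightL ha hb hp, prod_map_weightR hb hp, Er, sy, bP_append,
    Real.mul_rpow (mul_nonneg hpP hqP) haPr, Real.mul_rpow hpP hqP, Real.mul_rpow hpP haPr,
    mul_div_right_comm, Real.mul_rpow (div_nonneg hbL haP.le) hbR]
  ring

omit hp in
lemma bP_sy_div_aP_mem_Ico {k : ℕ} {σ : Wd m n} (hσ : σ ∈ Psi a b k) {β : ℝ}
    (hβ : ∀ j, β ≤ b j) : bP b (sy σ) / aP a σ.1 ∈ Set.Ico β 1 := by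
  obtain ⟨-, hR, hle, hlt⟩ := hσ
  have haP : 0 < aP a σ.1 := List.prod_map_pos ha σ.1
  have hne : sy σ ≠ [] := by simp [sy, List.ne_nil_of_length_pos hR]
  refine ⟨(le_div_iff₀ haP).2 ?_, (div_lt_one haP).2 hlt⟩
  calc β * aP a σ.1 ≤ b ((sy σ).getLast hne) * bP b (sy σ).dropLast :=
        mul_le_mul (hβ _) hle haP.le (hb _).le
    _ = bP b (sy σ) := by
      conv_rhs => rw [← List.dropLast_append_getLast hne]
      rw [bP_append, mul_comm]
      simp [bP]

lemma pairWeight_mem_Icc {k : ℕ} {σ : Wd m n} (hσ : σ ∈ Psi a b k) (hv : 0 ≤ v) {β : ℝ}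
    (hβ0 : 0 ≤ β) (hβ : ∀ j, β ≤ b j) :
    pairWeight (weightL a p b r t v) (weightR p b t v) σ ∈
      Set.Icc (β ^ v * Er a p r σ ^ t) (Er a p r σ ^ t) := by
  obtain ⟨hlo, hhi⟩ := bP_sy_div_aP_mem_Ico ha hb hσ hβ
  have hE : 0 ≤ Er a p r σ ^ t := Real.rpow_nonneg (Er_nonneg ha hp σ) t
  rw [pairWeight_weightL_weightR ha hb hp]
  constructor
  · rw [mul_comm]
    exact mul_le_mul_of_nonneg_left (Real.rpow_le_rpow hβ0 hlo hv) hE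
  · exact mul_le_of_le_one_right hE (Real.rpow_le_one (hβ0.trans hlo) hhi.le hv)

end Weights

theorem stmt15_general
    (m : ℕ) (hm : 2 ≤ m) (n : Fin m → ℕ) (hn : ∀ j, 1 ≤ n j)
    (a : Alph m n → ℝ) (b : Fin m → ℝ)
    (hab : ∀ g : Alph m n, 0 < a g ∧ a g < b g.1 ∧ b g.1 < 1)
    (p : Alph m n → ℝ) (hp : ∀ g, 0 < p g) (hp1 : ∑ g : Alph m n, p g = 1)
    (r : ℝ)
    (t : ℝ) (ht1 : t < 1)
    (hlim : Tendsto (fun k : ℕ => Real.log (Ih a b p r k t) / k) atTop (𝓝 0)) :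
    ∃ lam : Measure ((ℕ → Alph m n) × (ℕ → Fin m)), IsProbabilityMeasure lam ∧
      ∃ cst Cst : ℝ, 0 < cst ∧ cst ≤ Cst ∧
        ∀ σ ∈ PsiStar a b,
          ENNReal.ofReal (cst * Er a p r σ ^ t) ≤ lam (Cyl σ) ∧
          lam (Cyl σ) ≤ ENNReal.ofReal (Cst * Er a p r σ ^ t) := by
  have ha (g : Alph m n) : 0 < a g := (hab g).1
  have hb0 (j : Fin m) : 0 < b j := (hab ⟨j, ⟨0, hn j⟩⟩).1.trans (hab _).2.1
  have hb1 (j : Fin m) : b j < 1 := (hab ⟨j, ⟨0, hn j⟩⟩).2.2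
  have : Nonempty (Fin m) := ⟨⟨0, by omega⟩⟩
  have : Nonempty (Alph m n) := ⟨⟨Classical.arbitrary _, ⟨0, hn _⟩⟩⟩
  obtain ⟨jmin, hjmin⟩ := Finite.exists_min b
  obtain ⟨v, hv0, hv⟩ :=
    exists_nonneg_sum_mul_rpow_eq_one hb0 hb1 (one_le_sum_qf_rpow hp hp1 hn ht1.le)
  have hZ : 0 < ∑ g, weightL a p b r t v g :=
    Finset.sum_pos (fun g _ => weightL_pos ha hb0 hp g) Finset.univ_nonempty
  have hβ : 0 < b jmin ^ v := Real.rpow_pos_of_pos (hb0 jmin) v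
  have hbounds {k : ℕ} {σ : Wd m n} (hσ : σ ∈ Psi a b k) :=
    pairWeight_mem_Icc (r := r) (t := t) ha hb0 hp hσ hv0 (hb0 jmin).le hjmin
  have hIh (k : ℕ) := le_tsum_and_tsum_le_div
    (hasSum_pairWeight_Psi ha (fun g => (hab g).2.1.le) (fun j => (hb0 j).le) hb1
      (fun g => (weightL_pos ha hb0 hp g).le) hZ (weightR_nonneg hb0 hp) hv k)
    hβ (fun σ => Real.rpow_nonneg (Er_nonneg ha hp σ.1) t) (fun σ => (hbounds σ.2).1)
    (fun σ => (hbounds σ.2).2)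
  obtain ⟨lam, hlam, hcyl⟩ := exists_isProbabilityMeasure_Cyl_eq
    (fun g => (weightL_pos ha hb0 hp g).le)
    (eq_one_of_tendsto_log_div hZ hβ (fun k => (hIh k).1) (fun k => (hIh k).2) hlim)
    (weightR_nonneg hb0 hp) hv
  refine ⟨lam, hlam, b jmin ^ v, 1, hβ, Real.rpow_le_one (hb0 jmin).le (hb1 jmin).le hv0, ?_⟩
  rintro σ ⟨k, -, hσ⟩
  rw [hcyl, one_mul]
  exact ⟨ENNReal.ofReal_le_ofReal (hbounds hσ).1, ENNReal.ofReal_le_ofReal (hbounds hσ).2⟩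

theorem stmt15
    (m : ℕ) (hm : 2 ≤ m) (n : Fin m → ℕ) (hn : ∀ j, 1 ≤ n j)
    (a : Alph m n → ℝ) (b : Fin m → ℝ)
    (hab : ∀ g : Alph m n, 0 < a g ∧ a g < b g.1 ∧ b g.1 < 1)
    (p : Alph m n → ℝ) (hp : ∀ g, 0 < p g) (hp1 : ∑ g : Alph m n, p g = 1)
    (r : ℝ) (hr : 0 < r)
    (t : ℝ) (ht0 : 0 < t) (ht1 : t < 1)
    (hlim : Tendsto (fun k : ℕ => Real.log (Ih a b p r k t) / k) atTop (𝓝 0)) :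
    ∃ lam : Measure ((ℕ → Alph m n) × (ℕ → Fin m)), IsProbabilityMeasure lam ∧
      ∃ cst Cst : ℝ, 0 < cst ∧ cst ≤ Cst ∧
        ∀ σ ∈ PsiStar a b,
          ENNReal.ofReal (cst * Er a p r σ ^ t) ≤ lam (Cyl σ) ∧
          lam (Cyl σ) ≤ ENNReal.ofReal (Cst * Er a p r σ ^ t) :=
  stmt15_general m hm n hn a b hab p hp hp1 r t ht1 hlim

end

end LGQ
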